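/- Let $C$ be a compact topological space, $X$ a topological space, $c_1, c_2 : C \to X$ continuous maps, and $t : X \to \mathbb{R} \times \mathbb{R}$ a continuous map. Let $F' = t^{-1}(\{(0,0)\})$, let $W \subseteq C$ be an open set, and set $F = c_1^{-1}(F') \cap c_2^{-1}(F') \cap \overline{W}$, where $\overline{W}$ denotes the closure of $W$ in $C$. Assume $F \subseteq W$ (the strengthened form of condition (d)). Then there exist $x_0 > 0$ and $y_0 > 0$ such that for all $x, y$ with $0 < x \le x_0$ and $0 < y \le y_0$, the set $S = W \cap c_1^{-1}(t^{-1}([0,x] \times [0,y])) \cap c_2^{-1}(t^{-1}([0,x] \times [0,y]))$ is closed in $C$ (equivalently, the closure of $S$ is contained in $W$), and hence $S$ is compact. -/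
import Mathlib


open Set

/-- The strengthened condition (d) implies condition (d'): for all sufficiently small
`x, y > 0`, the set `S = W ∩ c₁⁻¹ t⁻¹ ([0,x] × [0,y]) ∩ c₂⁻¹ t⁻¹ ([0,x] × [0,y])`
is closed in the compact space `C`, and hence compact. -/
theorem condition_d_implies_condition_d' {C X : Type*} [TopologicalSpace C]
    [CompactSpace C] [TopologicalSpace X]
    (c₁ c₂ : C → X) (hc₁ : Continuous c₁) (hc₂ : Continuous c₂)
    (t : X → ℝ × ℝ) (ht : Continuous t)
    (W : Set C) (hW : IsOpen W)
    (F' : Set X) (hF' : F' = t ⁻¹' {(0, 0)})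
    (F : Set C) (hF : F = c₁ ⁻¹' F' ∩ c₂ ⁻¹' F' ∩ closure W)
    (hFW : F ⊆ W) :
    ∃ x₀ > (0 : ℝ), ∃ y₀ > (0 : ℝ), ∀ x y : ℝ, 0 < x → x ≤ x₀ → 0 < y → y ≤ y₀ →
      IsClosed
        (W ∩ c₁ ⁻¹' (t ⁻¹' (Icc 0 x ×ˢ Icc 0 y)) ∩ c₂ ⁻¹' (t ⁻¹' (Icc 0 x ×ˢ Icc 0 y))) ∧
      closure
        (W ∩ c₁ ⁻¹' (t ⁻¹' (Icc 0 x ×ˢ Icc 0 y)) ∩ c₂ ⁻¹' (t ⁻¹' (Icc 0 x ×ˢ Icc 0 y))) ⊆ W ∧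
      IsCompact
        (W ∩ c₁ ⁻¹' (t ⁻¹' (Icc 0 x ×ˢ Icc 0 y)) ∩ c₂ ⁻¹' (t ⁻¹' (Icc 0 x ×ˢ Icc 0 y))) := by
  -- auxiliary family of closed "boxes"
  set box : ℕ → Set (ℝ × ℝ) := fun n =>
    Icc (0:ℝ) (1/(n+1:ℝ)) ×ˢ Icc (0:ℝ) (1/(n+1:ℝ)) with hbox
  set A : ℕ → Set C := fun n => c₁ ⁻¹' (t ⁻¹' box n) ∩ c₂ ⁻¹' (t ⁻¹' box n) with hA
  have hboxclosed : ∀ n, IsClosed (box n) := fun n =>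
    (isClosed_Icc).prod isClosed_Icc
  have hAclosed : ∀ n, IsClosed (A n) :=
    fun n => ((hboxclosed n).preimage ht |>.preimage hc₁).inter
      ((hboxclosed n).preimage ht |>.preimage hc₂)
  have hboxanti : Antitone box := by
    intro m n hmn
    have h1 : (1:ℝ)/(n+1) ≤ 1/(m+1) := by
      apply one_div_le_one_div_of_le
      · positivity
      · exact_mod_cast Nat.succ_le_succ hmn
    exact Set.prod_mono (Icc_subset_Icc le_rfl h1) (Icc_subset_Icc le_rfl h1)
  have hAanti : Antitone A := by
    intro m n hmn
    exact Set.inter_subset_inter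
      (preimage_mono (preimage_mono (hboxanti hmn)))
      (preimage_mono (preimage_mono (hboxanti hmn)))
  -- the intersection of all boxes is {(0,0)}
  have hboxinter : ∀ p : ℝ × ℝ, (∀ n, p ∈ box n) → p = (0, 0) := by
    intro p hp
    have h1 : ∀ z : ℝ, 0 ≤ z → (∀ n : ℕ, z ≤ 1/(n+1:ℝ)) → z = 0 := by
      intro z hz hle
      by_contra hne
      have hzpos : 0 < z := lt_of_le_of_ne hz (Ne.symm hne)
      obtain ⟨n, hn⟩ := exists_nat_one_div_lt hzpos
      exact absurd (hle n) (not_le.mpr hn)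
    have h1' : p.1 = 0 := h1 p.1 (hp 0).1.1 (fun n => (hp n).1.2
      )
    have h2' : p.2 = 0 := h1 p.2 (hp 0).2.1 (fun n => (hp n).2.2)
    exact Prod.ext h1' h2'
  -- the closed set (closure W \ W) misses some A n
  have hempty : (closure W \ W) ∩ ⋂ n, A n = ∅ := by
    ext a
    simp only [mem_inter_iff, mem_diff, mem_iInter, mem_empty_iff_false, iff_false]
    rintro ⟨⟨haW, haW'⟩, haA⟩
    apply haW'
    apply hFW
    rw [hF, hF']
    refine ⟨⟨?_, ?_⟩, haW⟩
    · have := hboxinter (t (c₁ a)) (fun n => (haA n).1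
        )
      simpa [mem_preimage] using this
    · have := hboxinter (t (c₂ a)) (fun n => (haA n).2)
      simpa [mem_preimage] using this
  have hcpt : IsCompact (closure W \ W) :=
    (isClosed_closure.sdiff hW).isCompact
  obtain ⟨n, hn⟩ := hcpt.elim_directed_family_closed A hAclosed hempty
    (hAanti.directed_ge)
  -- conclude with x₀ = y₀ = 1/(n+1)
  have hpos : (0:ℝ) < 1/(n+1:ℝ) := by positivity
  refine ⟨1/(n+1:ℝ), hpos, 1/(n+1:ℝ), hpos, ?_⟩
  intro x y hx hxle hy hyle
  set B := Icc (0:ℝ) x ×ˢ Icc (0:ℝ) y with hB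
  have hBsub : B ⊆ box n :=
    Set.prod_mono (Icc_subset_Icc le_rfl hxle) (Icc_subset_Icc le_rfl hyle)
  set S := W ∩ c₁ ⁻¹' (t ⁻¹' B) ∩ c₂ ⁻¹' (t ⁻¹' B) with hS
  have hTclosed : IsClosed (c₁ ⁻¹' (t ⁻¹' B) ∩ c₂ ⁻¹' (t ⁻¹' B)) :=
    (((isClosed_Icc.prod isClosed_Icc).preimage ht).preimage hc₁).inter
      (((isClosed_Icc.prod isClosed_Icc).preimage ht).preimage hc₂)
  have hclW : closure S ⊆ W := by
    intro a ha
    have haclW : a ∈ closure W := closure_mono (by intro b hb; exact hb.1.1) ha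
    have haT : a ∈ c₁ ⁻¹' (t ⁻¹' B) ∩ c₂ ⁻¹' (t ⁻¹' B) := by
      have : closure S ⊆ c₁ ⁻¹' (t ⁻¹' B) ∩ c₂ ⁻¹' (t ⁻¹' B) :=
        closure_minimal (by intro b hb; exact ⟨hb.1.2, hb.2⟩) hTclosed
      exact this ha
    by_contra haW
    have : a ∈ (closure W \ W) ∩ A n := by
      refine ⟨⟨haclW, haW⟩, ?_, ?_⟩
      · exact preimage_mono (preimage_mono hBsub) haT.1
      · exact preimage_mono (preimage_mono hBsub) haT.2
    rw [hn] at this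
    exact this
  have hSclosed : IsClosed S := by
    have hsub : closure S ⊆ S := by
      intro a ha
      have haT : a ∈ c₁ ⁻¹' (t ⁻¹' B) ∩ c₂ ⁻¹' (t ⁻¹' B) :=
        closure_minimal (by intro b hb; exact ⟨hb.1.2, hb.2⟩) hTclosed ha
      exact ⟨⟨hclW ha, haT.1⟩, haT.2⟩
    exact isClosed_of_closure_subset hsub
  exact ⟨hSclosed, hclW, hSclosed.isCompact⟩
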